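/- Let X = ℝ^d with d ≥ 2, let p₁, …, pₙ ∈ X with n ≥ 1, let γ₁, …, γₙ be gauges on X, let f(x) = Σᵢ₌₁ⁿ γᵢ(pᵢ − x), and let α ∈ ℝ. Then every point x₀ in the (d−2)-skeleton ext_{d−2}(f_{≤α}) of the sublevel set f_{≤α} = {x ∈ X : f(x) ≤ α} can be expressed as x₀ = pᵢ + λw with suitable i ∈ {1, …, n}, a real number λ ∈ [0, α], and a point w ∈ ext_{d−2}(−B_{γᵢ}), where B_{γᵢ} = {z ∈ X : γᵢ(z) ≤ 1} is the unit ball of γᵢ. -/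

import Mathlib

open scoped Pointwise

/-- A gauge on a real vector space: nonnegative, definite at `0`, positively homogeneous,
and subadditive. -/
def IsGauge {X : Type*} [AddCommGroup X] [Module ℝ X] (γ : X → ℝ) : Prop :=
  (∀ x, 0 ≤ γ x) ∧ (∀ x : X, γ x = 0 → x = 0) ∧
    (∀ (l : ℝ) (x : X), 0 ≤ l → γ (l • x) = l * γ x) ∧
    ∀ x y, γ (x + y) ≤ γ x + γ y

/-- `F` is a face of the closed convex set `K`: a convex subset of `K` such that whenever a
relative interior point of a segment `[x,y] ⊆ K` lies in `F`, the whole segment lies in `F`. -/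
def IsFaceOf {X : Type*} [AddCommGroup X] [Module ℝ X] (K F : Set X) : Prop :=
  F ⊆ K ∧ Convex ℝ F ∧
    ∀ x ∈ K, ∀ y ∈ K, (openSegment ℝ x y ∩ F).Nonempty → segment ℝ x y ⊆ F

/-- The affine dimension of a set: the dimension of the direction of its affine span. -/
noncomputable def affDim {X : Type*} [AddCommGroup X] [Module ℝ X] (A : Set X) : ℕ :=
  Module.finrank ℝ (affineSpan ℝ A).direction

/-- The `k`-skeleton of `K`: the set of `k`-extreme points, i.e. the points lying in the
relative interior of a face of `K` of affine dimension at most `k`. -/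
def kSkeleton {X : Type*} [NormedAddCommGroup X] [NormedSpace ℝ X]
    (k : ℕ) (K : Set X) : Set X :=
  {x : X | x ∈ K ∧ ∃ F : Set X, IsFaceOf K F ∧ x ∈ intrinsicInterior ℝ F ∧ affDim F ≤ k}

/-!
If `x₀ = pᵢ` for some `i`, take `λ = 0` and an extreme point `w` of the compact set `-Bᵢ`.
Otherwise `pᵢ - x₀ = λᵢ • (-wᵢ)` with `λᵢ = γᵢ(pᵢ - x₀) > 0`, so `wᵢ` lies on the boundary of
`-Bᵢ`. If no `wᵢ` were `(d-2)`-extreme, the face of `-Bᵢ` carrying `wᵢ` in its relative interior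
would span a hyperplane missing `0`, and `γᵢ` would be linear near `pᵢ - x₀`.
Then `f` is affine near `x₀`, so `{f ≤ α}` contains a `(d-1)`-dimensional disc of a level set
of `f` centred at `x₀`, and the face of `{f ≤ α}` through `x₀` has dimension at least `d - 1`.
-/

open Set Filter Topology Module

section Face

variable {E : Type*} [AddCommGroup E] [Module ℝ E]

theorem IsFaceOf.add_mem_of_sub_mem {K F : Set E} (hF : IsFaceOf K F) {x v : E} (hx : x ∈ F)
    (hadd : x + v ∈ K) (hsub : x - v ∈ K) : x + v ∈ F :=
  hF.2.2 _ hadd _ hsub ⟨x, ⟨1 / 2, 1 / 2, by norm_num, by norm_num, by norm_num, by module⟩, hx⟩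
    (left_mem_segment ℝ _ _)

def minimalFace (C : Set E) (w : E) : Set E :=
  {z ∈ C | ∃ s : ℝ, 0 < s ∧ w + s • (w - z) ∈ C}

variable {C : Set E} {w : E}

theorem self_mem_minimalFace (hw : w ∈ C) : w ∈ minimalFace C w :=
  ⟨hw, 1, one_pos, by simpa using hw⟩

theorem Convex.convex_minimalFace (hC : Convex ℝ C) (hw : w ∈ C) :
    Convex ℝ (minimalFace C w) := by
  have shrink {z : E} {s₀ s : ℝ} (hs₀ : 0 < s₀) (hs : 0 ≤ s) (hss₀ : s ≤ s₀)
      (h : w + s₀ • (w - z) ∈ C) : w + s • (w - z) ∈ C := by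
    have := hC.add_smul_mem hw h ⟨div_nonneg hs hs₀.le, div_le_one_of_le₀ hss₀ hs₀.le⟩
    rwa [smul_smul, div_mul_cancel₀ s hs₀.ne'] at this
  rintro z₁ ⟨hz₁, s₁, hs₁, h₁⟩ z₂ ⟨hz₂, s₂, hs₂, h₂⟩ a b ha hb hab
  have hs : 0 < min s₁ s₂ := lt_min hs₁ hs₂
  refine ⟨hC hz₁ hz₂ ha hb hab, min s₁ s₂, hs, ?_⟩
  convert hC (shrink hs₁ hs.le (min_le_left _ _) h₁) (shrink hs₂ hs.le (min_le_right _ _) h₂)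
    ha hb hab using 1
  obtain rfl : b = 1 - a := by linarith
  module

theorem Convex.mem_minimalFace_of_mem_openSegment (hC : Convex ℝ C) {x y q : E} (hx : x ∈ C)
    (hy : y ∈ C) (hq : q ∈ openSegment ℝ x y) (hqF : q ∈ minimalFace C w) :
    x ∈ minimalFace C w := by
  obtain ⟨t₁, t₂, ht₁, ht₂, ht, rfl⟩ := hq
  obtain ⟨-, s, hs, hc⟩ := hqF
  refine ⟨hx, s * t₁ / (1 + s * t₂), by positivity, ?_⟩
  -- the extension of `[x, w]` beyond `w` meets the segment from `y` to `w + s • (w - q)`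
  convert hC hc hy (a := 1 / (1 + s * t₂)) (b := s * t₂ / (1 + s * t₂)) (by positivity)
    (by positivity) (by field_simp) using 1
  obtain rfl : t₂ = 1 - t₁ := by linarith
  match_scalars <;> field_simp <;> ring

theorem Convex.isFaceOf_minimalFace (hC : Convex ℝ C) (hw : w ∈ C) :
    IsFaceOf C (minimalFace C w) :=
  ⟨fun _ hz => hz.1, hC.convex_minimalFace hw, fun x hx y hy ⟨_, hq, hqF⟩ =>
    (hC.convex_minimalFace hw).segment_subset (hC.mem_minimalFace_of_mem_openSegment hx hy hq hqF)
      (hC.mem_minimalFace_of_mem_openSegment hy hx (openSegment_symm ℝ x y ▸ hq) hqF)⟩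

end Face

section Normed

variable {E : Type*} [NormedAddCommGroup E] [NormedSpace ℝ E]

theorem mem_intrinsicInterior_iff_eventually {s : Set E} {x : E} :
    x ∈ intrinsicInterior ℝ s ↔
      x ∈ s ∧ ∀ᶠ v in 𝓝 0, v ∈ (affineSpan ℝ s).direction → x + v ∈ s := by
  constructor
  · rintro ⟨y, hy, rfl⟩
    obtain ⟨u, hu, hus⟩ := (mem_nhds_subtype _ _ _).1 (mem_interior_iff_mem_nhds.1 hy)
    refine ⟨(interior_subset hy : y ∈ Subtype.val ⁻¹' s), ?_⟩
    filter_upwards [((continuous_const_add (y : E)).tendsto' 0 y (add_zero _)).eventually hu]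
      with v hv hvV
    have hmem : (y : E) + v ∈ affineSpan ℝ s := by
      simpa [add_comm] using AffineSubspace.vadd_mem_of_mem_direction hvV y.2
    exact hus (a := ⟨y + v, hmem⟩) hv
  · rintro ⟨hx, h⟩
    refine ⟨⟨x, subset_affineSpan ℝ s hx⟩, mem_interior_iff_mem_nhds.2 ?_, rfl⟩
    refine (mem_nhds_subtype _ _ _).2
      ⟨_, ((continuous_sub_right x).tendsto' x 0 (sub_self x)).eventually h, fun z hz => ?_⟩
    simpa using hz (AffineSubspace.vsub_mem_direction z.2 (subset_affineSpan ℝ s hx))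

theorem Convex.openSegment_intrinsicInterior_self_subset_intrinsicInterior {s : Set E}
    (hs : Convex ℝ s) {x y : E} (hx : x ∈ intrinsicInterior ℝ s) (hy : y ∈ s) :
    openSegment ℝ x y ⊆ intrinsicInterior ℝ s := by
  rintro _ ⟨a, b, ha, hb, hab, rfl⟩
  obtain ⟨hxs, hball⟩ := mem_intrinsicInterior_iff_eventually.1 hx
  refine mem_intrinsicInterior_iff_eventually.2 ⟨hs hxs hy ha.le hb.le hab, ?_⟩
  filter_upwards [((continuous_const_smul a⁻¹).tendsto' 0 0 (smul_zero _)).eventually hball]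
    with v hv hvV
  convert hs (hv (Submodule.smul_mem _ _ hvV)) hy ha.le hb.le hab using 1
  rw [smul_add, smul_inv_smul₀ ha.ne']
  abel

theorem le_direction_affineSpan_of_eventually {s : Set E} {x : E} (hx : x ∈ s)
    {W : Submodule ℝ E} (h : ∀ᶠ v in 𝓝 0, v ∈ W → x + v ∈ s) :
    W ≤ (affineSpan ℝ s).direction := by
  intro u hu
  have hlim : Tendsto (fun t : ℝ => t • u) (𝓝[≠] 0) (𝓝 0) :=
    tendsto_nhdsWithin_of_tendsto_nhds ((continuous_id.smul continuous_const).tendsto' 0 0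
      (zero_smul ℝ u))
  obtain ⟨t, hts, ht⟩ := ((hlim.eventually h).and self_mem_nhdsWithin).exists
  have htu : t • u ∈ (affineSpan ℝ s).direction := by
    simpa using AffineSubspace.vsub_mem_direction
      (subset_affineSpan ℝ s (hts (W.smul_mem t hu))) (subset_affineSpan ℝ s hx)
  exact (Submodule.smul_mem_iff _ ht).1 htu

theorem extremePoints_subset_kSkeleton (k : ℕ) (K : Set E) :
    extremePoints ℝ K ⊆ kSkeleton k K := by
  intro w hw
  refine ⟨hw.1, {w}, ⟨singleton_subset_iff.2 hw.1, convex_singleton w, ?_⟩, by simp, ?_⟩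
  · rintro x hx y hy ⟨q, hq, rfl⟩
    obtain ⟨rfl, rfl⟩ := (mem_extremePoints.1 hw).2 x hx y hy hq
    simp
  · rw [affDim, direction_affineSpan, vectorSpan_singleton, finrank_bot]
    exact k.zero_le

variable [FiniteDimensional ℝ E]

theorem Convex.mem_intrinsicInterior_minimalFace {C : Set E} (hC : Convex ℝ C) {w : E}
    (hw : w ∈ C) : w ∈ intrinsicInterior ℝ (minimalFace C w) := by
  have hG := hC.convex_minimalFace hw
  obtain ⟨a, ha⟩ := Set.Nonempty.intrinsicInterior hG ⟨w, self_mem_minimalFace hw⟩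
  obtain ⟨haC, s, hs, hb⟩ := intrinsicInterior_subset ha
  -- `w` lies strictly between `a` and the point `w + s • (w - a)` of the face
  have hbG : w + s • (w - a) ∈ minimalFace C w := by
    refine ⟨hb, s⁻¹, inv_pos.2 hs, ?_⟩
    rwa [sub_add_cancel_left, smul_neg, inv_smul_smul₀ hs.ne', neg_sub, add_sub_cancel]
  refine hG.openSegment_intrinsicInterior_self_subset_intrinsicInterior ha hbG
    ⟨s / (1 + s), 1 / (1 + s), by positivity, by positivity, by field_simp; ring, ?_⟩
  match_scalars <;> field_simp
  ring

theorem Convex.exists_isFaceOf_mem_intrinsicInterior {C : Set E} (hC : Convex ℝ C) {w : E}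
    (hw : w ∈ C) : ∃ G, IsFaceOf C G ∧ w ∈ intrinsicInterior ℝ G :=
  ⟨minimalFace C w, hC.isFaceOf_minimalFace hw, hC.mem_intrinsicInterior_minimalFace hw⟩

theorem Submodule.exists_continuousLinearMap_eq_one_ker_le {V : Submodule ℝ E} {u : E}
    (hu : u ∉ V) (hV : finrank ℝ E - 1 ≤ finrank ℝ V) :
    ∃ φ : E →L[ℝ] ℝ, φ u = 1 ∧ (φ : E →ₗ[ℝ] ℝ).ker ≤ V := by
  obtain ⟨f, hfu, hfV⟩ := V.exists_dual_map_eq_bot_of_notMem hu inferInstance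
  have hVf : V ≤ f.ker := LinearMap.le_ker_iff_map.2 hfV
  have hlt : finrank ℝ f.ker < finrank ℝ E :=
    Submodule.finrank_lt fun h => hfu (LinearMap.mem_ker.1 (h ▸ Submodule.mem_top))
  have hfV : f.ker = V := (Submodule.eq_of_le_of_finrank_le hVf (by omega)).symm
  refine ⟨(f u)⁻¹ • LinearMap.toContinuousLinearMap f, by simp [hfu], fun v hv => ?_⟩
  rw [← hfV, LinearMap.mem_ker]
  simpa [hfu] using hv

theorem finrank_sub_one_le_finrank_ker (φ : E →ₗ[ℝ] ℝ) :
    finrank ℝ E - 1 ≤ finrank ℝ φ.ker := by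
  have := φ.finrank_range_add_finrank_ker
  have := φ.range.finrank_le
  rw [finrank_self] at this
  omega

theorem IsFaceOf.finrank_sub_one_le_affDim {f : E → ℝ} {α : ℝ} {F : Set E}
    (hF : IsFaceOf {x | f x ≤ α} F) {x₀ : E} (hx₀ : x₀ ∈ F) {φ : E →ₗ[ℝ] ℝ}
    (hf : ∀ᶠ x in 𝓝 x₀, f x = f x₀ + φ (x - x₀)) : finrank ℝ E - 1 ≤ affDim F := by
  have hK : ∀ᶠ v in 𝓝 0, v ∈ φ.ker → x₀ + v ∈ {x | f x ≤ α} := by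
    filter_upwards [((continuous_const_add x₀).tendsto' 0 x₀ (add_zero x₀)).eventually hf]
      with v hv hvφ
    rw [hv, add_sub_cancel_left, LinearMap.mem_ker.1 hvφ, add_zero]
    exact hF.1 hx₀
  have hKF : ∀ᶠ v in 𝓝 0, v ∈ φ.ker → x₀ + v ∈ F := by
    filter_upwards [hK, (continuous_neg.tendsto' 0 0 neg_zero).eventually hK] with v h₁ h₂ hv
    exact hF.add_mem_of_sub_mem hx₀ (h₁ hv) (by simpa [sub_eq_add_neg] using h₂ (φ.ker.neg_mem hv))
  exact (finrank_sub_one_le_finrank_ker φ).trans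
    (Submodule.finrank_mono (le_direction_affineSpan_of_eventually hx₀ hKF))

end Normed

namespace IsGauge

variable {E : Type*} [NormedAddCommGroup E] [NormedSpace ℝ E] {γ : E → ℝ}

theorem map_smul (hγ : IsGauge γ) {l : ℝ} (hl : 0 ≤ l) (x : E) : γ (l • x) = l * γ x :=
  hγ.2.2.1 l x hl

theorem map_zero (hγ : IsGauge γ) : γ 0 = 0 := by
  simpa using hγ.map_smul le_rfl (0 : E)

theorem pos_of_ne_zero (hγ : IsGauge γ) {x : E} (hx : x ≠ 0) : 0 < γ x :=
  (hγ.1 x).lt_of_ne' (mt (hγ.2.1 x) hx)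

theorem convexOn (hγ : IsGauge γ) : ConvexOn ℝ univ γ :=
  ⟨convex_univ, fun x _ y _ a b ha hb _ => by
    simpa only [hγ.map_smul ha, hγ.map_smul hb, smul_eq_mul] using hγ.2.2.2 (a • x) (b • y)⟩

theorem convex_setOf_le_one (hγ : IsGauge γ) : Convex ℝ {z | γ z ≤ 1} := by
  simpa using hγ.convexOn.convex_le 1

theorem notMem_of_eventually_le_one (hγ : IsGauge γ) {u : E} (hu : γ u = 1)
    {V : Submodule ℝ E} (hV : ∀ᶠ v in 𝓝 0, v ∈ V → γ (u + v) ≤ 1) : u ∉ V := by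
  intro huV
  have hlim : Tendsto (fun t : ℝ => t • u) (𝓝[>] 0) (𝓝 0) :=
    tendsto_nhdsWithin_of_tendsto_nhds ((continuous_id.smul continuous_const).tendsto' 0 0
      (zero_smul ℝ u))
  obtain ⟨t, htV, ht⟩ := ((hlim.eventually hV).and self_mem_nhdsWithin).exists
  have := htV (V.smul_mem t huV)
  rw [show u + t • u = (1 + t) • u by module, hγ.map_smul (by linarith), hu] at this
  linarith

theorem eventuallyEq_of_eventually_le_one (hγ : IsGauge γ) {u : E} (hu : γ u = 1)
    {V : Submodule ℝ E} (hV : ∀ᶠ v in 𝓝 0, v ∈ V → γ (u + v) ≤ 1) {φ : E →L[ℝ] ℝ}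
    (hφ : φ u = 1) (hker : (φ : E →ₗ[ℝ] ℝ).ker ≤ V) {l : ℝ} (hl : 0 < l) :
    γ =ᶠ[𝓝 (l • u)] φ := by
  have hflat : ∀ᶠ v in 𝓝 0, v ∈ V → γ (u + v) = 1 := by
    filter_upwards [hV, (continuous_neg.tendsto' 0 0 neg_zero).eventually hV] with v h₁ h₂ hv
    have := hγ.2.2.2 (u + v) (u + -v)
    rw [show u + v + (u + -v) = (2 : ℝ) • u by module, hγ.map_smul zero_le_two, hu] at this
    linarith [h₁ hv, h₂ (V.neg_mem hv)]
  -- `y = φ y • (u + v)` with `v ∈ ker φ`, and `v → 0` as `y → l • u`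
  have hchart : Tendsto (fun y => (φ y)⁻¹ • y - u) (𝓝 (l • u)) (𝓝 0) := by
    have : ContinuousAt (fun y => (φ y)⁻¹ • y - u) (l • u) := by
      fun_prop (disch := simp [hφ, hl.ne'])
    simpa [hφ, hl.ne'] using this.tendsto
  have hpos : ∀ᶠ y in 𝓝 (l • u), 0 < φ y :=
    continuousAt_const.eventually_lt φ.continuous.continuousAt (by simpa [hφ] using hl)
  filter_upwards [hchart.eventually hflat, hpos] with y hy hy₀
  have hmem : (φ y)⁻¹ • y - u ∈ V := hker (by simp [hφ, hy₀.ne'])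
  calc γ y = γ (φ y • (u + ((φ y)⁻¹ • y - u))) := by
        rw [add_sub_cancel, smul_inv_smul₀ hy₀.ne']
    _ = φ y := by rw [hγ.map_smul hy₀.le, hy hmem, mul_one]

variable [FiniteDimensional ℝ E]

theorem continuous (hγ : IsGauge γ) : Continuous γ :=
  continuousOn_univ.1 (hγ.convexOn.continuousOn isOpen_univ)

theorem isCompact_setOf_le_one (hγ : IsGauge γ) : IsCompact {z | γ z ≤ 1} := by
  rcases subsingleton_or_nontrivial E with hE | hE
  · exact Set.subsingleton_of_subsingleton.isCompact
  obtain ⟨z, hz, hmin⟩ := (isCompact_sphere (0 : E) 1).exists_isMinOn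
    (NormedSpace.sphere_nonempty.2 zero_le_one) hγ.continuous.continuousOn
  have hz₀ : 0 < γ z := hγ.pos_of_ne_zero (ne_zero_of_mem_sphere one_ne_zero ⟨z, hz⟩)
  refine Metric.isCompact_of_isClosed_isBounded (isClosed_le hγ.continuous continuous_const)
    ((Metric.isBounded_closedBall (x := 0) (r := (γ z)⁻¹)).subset fun x hx => ?_)
  rcases eq_or_ne x 0 with rfl | hx₀
  · simp [hz₀.le]
  have hnx : 0 < ‖x‖ := norm_pos_iff.2 hx₀
  have h := hmin (a := ‖x‖⁻¹ • x) (by simp [norm_smul, hnx.ne'])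
  rw [mem_ofPred, hγ.map_smul (inv_nonneg.2 hnx.le)] at h
  rw [mem_closedBall_zero_iff, le_inv_comm₀ hnx hz₀]
  calc γ z ≤ ‖x‖⁻¹ * γ x := h
    _ ≤ ‖x‖⁻¹ := mul_le_of_le_one_right (inv_nonneg.2 hnx.le) hx

theorem mem_kSkeleton_or_exists_eventuallyEq (hγ : IsGauge γ) {y : E} (hy : y ≠ 0) :
    -((γ y)⁻¹ • y) ∈ kSkeleton (finrank ℝ E - 2) (-{z | γ z ≤ 1}) ∨
      ∃ φ : E →L[ℝ] ℝ, γ =ᶠ[𝓝 y] φ := by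
  have hl := hγ.pos_of_ne_zero hy
  set u := (γ y)⁻¹ • y
  have hu : γ u = 1 := by rw [hγ.map_smul (inv_nonneg.2 hl.le), inv_mul_cancel₀ hl.ne']
  have huB : -u ∈ -{z | γ z ≤ 1} := by simpa using hu.le
  obtain ⟨G, hG, huG⟩ := hγ.convex_setOf_le_one.neg.exists_isFaceOf_mem_intrinsicInterior huB
  by_cases hdim : affDim G ≤ finrank ℝ E - 2
  · exact Or.inl ⟨huB, G, hG, huG, hdim⟩
  right
  have hdimV : finrank ℝ E - 1 ≤ finrank ℝ (affineSpan ℝ G).direction := by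
    rw [affDim] at hdim
    omega
  set V := (affineSpan ℝ G).direction
  have hV : ∀ᶠ v in 𝓝 0, v ∈ V → γ (u + v) ≤ 1 := by
    filter_upwards [(continuous_neg.tendsto' 0 0 neg_zero).eventually
      (mem_intrinsicInterior_iff_eventually.1 huG).2] with v hv hvV
    have h := hG.1 (hv (V.neg_mem hvV))
    rwa [Set.mem_neg, mem_ofPred_eq, neg_add, neg_neg, neg_neg] at h
  obtain ⟨φ, hφ, hker⟩ :=
    V.exists_continuousLinearMap_eq_one_ker_le (hγ.notMem_of_eventually_le_one hu hV) hdimV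
  refine ⟨φ, ?_⟩
  simpa [u, smul_inv_smul₀ hl.ne'] using hγ.eventuallyEq_of_eventually_le_one hu hV hφ hker hl

end IsGauge

theorem eventually_sum_apply_sub_eq {E : Type*} [NormedAddCommGroup E] [NormedSpace ℝ E]
    {ι : Type*} [Fintype ι] {γ : ι → E → ℝ} {p : ι → E} {x₀ : E} {φ : ι → E →L[ℝ] ℝ}
    (h : ∀ i, γ i =ᶠ[𝓝 (p i - x₀)] φ i) :
    ∀ᶠ x in 𝓝 x₀, ∑ i, γ i (p i - x) = ∑ i, γ i (p i - x₀) + (-∑ i, φ i) (x - x₀) := by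
  have hsplit (i : ι) (x : E) : φ i (p i - x) = φ i (p i - x₀) - φ i (x - x₀) := by
    rw [← map_sub, sub_sub_sub_cancel_right]
  filter_upwards [eventually_all.2 fun i =>
    ((continuous_sub_left (p i)).tendsto x₀).eventually (h i)] with x hx
  simp only [hx, (h _).eq_of_nhds]
  rw [Finset.sum_congr rfl fun i _ => hsplit i x, Finset.sum_sub_distrib]
  simp [sub_eq_add_neg]

theorem skeleton_of_sublevel_set_fermatTorricelli_general
    {d : ℕ} (hd : 2 ≤ d) {n : ℕ}
    (p : Fin n → EuclideanSpace ℝ (Fin d))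
    (γ : Fin n → EuclideanSpace ℝ (Fin d) → ℝ) (hγ : ∀ i, IsGauge (γ i)) (α : ℝ)
    (x₀ : EuclideanSpace ℝ (Fin d))
    (hx₀ : x₀ ∈ kSkeleton (d - 2) {x : EuclideanSpace ℝ (Fin d) | ∑ i, γ i (p i - x) ≤ α}) :
    ∃ (i : Fin n) (l : ℝ) (w : EuclideanSpace ℝ (Fin d)),
      l ∈ Set.Icc (0 : ℝ) α ∧
      w ∈ kSkeleton (d - 2) (-{z : EuclideanSpace ℝ (Fin d) | γ i z ≤ 1}) ∧
      x₀ = p i + l • w := by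
  obtain ⟨hx₀K, F, hF, hx₀F, hdimF⟩ := hx₀
  have hE : finrank ℝ (EuclideanSpace ℝ (Fin d)) = d := finrank_euclideanSpace_fin
  have hle (i : Fin n) : γ i (p i - x₀) ≤ α :=
    (Finset.single_le_sum (f := fun j => γ j (p j - x₀)) (fun j _ => (hγ j).1 _)
      (Finset.mem_univ i)).trans hx₀K
  by_cases hp : ∃ j, p j = x₀
  · obtain ⟨j, rfl⟩ := hp
    obtain ⟨w, hw⟩ := (hγ j).isCompact_setOf_le_one.neg.extremePoints_nonempty
      ⟨0, by simp [(hγ j).map_zero]⟩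
    exact ⟨j, 0, w, ⟨le_rfl, by simpa [(hγ j).map_zero] using hle j⟩,
      extremePoints_subset_kSkeleton _ _ hw, by simp⟩
  push Not at hp
  by_contra! hbad
  have hlin (i : Fin n) : ∃ φ : _ →L[ℝ] ℝ, γ i =ᶠ[𝓝 (p i - x₀)] φ := by
    have hy : p i - x₀ ≠ 0 := sub_ne_zero.2 (hp i)
    refine ((hγ i).mem_kSkeleton_or_exists_eventuallyEq hy).resolve_left fun hsk =>
      hbad i _ _ ⟨(hγ i).1 _, hle i⟩ (hE ▸ hsk) ?_
    rw [smul_neg, smul_inv_smul₀ ((hγ i).pos_of_ne_zero hy).ne']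
    abel
  choose φ hφ using hlin
  have := hF.finrank_sub_one_le_affDim (intrinsicInterior_subset hx₀F)
    (eventually_sum_apply_sub_eq hφ)
  omega

/-- Every point of the `(d-2)`-skeleton of the sublevel set `{x : ∑ γᵢ(pᵢ - x) ≤ α}` is of
the form `pᵢ + λ • w` with `0 ≤ λ ≤ α` and `w` in the `(d-2)`-skeleton of `-Bᵢ`, where `Bᵢ`
is the unit ball of the gauge `γᵢ`. -/
theorem skeleton_of_sublevel_set_fermatTorricelli
    {d : ℕ} (hd : 2 ≤ d) {n : ℕ} (hn : 1 ≤ n)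
    (p : Fin n → EuclideanSpace ℝ (Fin d))
    (γ : Fin n → EuclideanSpace ℝ (Fin d) → ℝ) (hγ : ∀ i, IsGauge (γ i)) (α : ℝ)
    (x₀ : EuclideanSpace ℝ (Fin d))
    (hx₀ : x₀ ∈ kSkeleton (d - 2) {x : EuclideanSpace ℝ (Fin d) | ∑ i, γ i (p i - x) ≤ α}) :
    ∃ (i : Fin n) (l : ℝ) (w : EuclideanSpace ℝ (Fin d)),
      l ∈ Set.Icc (0 : ℝ) α ∧
      w ∈ kSkeleton (d - 2) (-{z : EuclideanSpace ℝ (Fin d) | γ i z ≤ 1}) ∧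
      x₀ = p i + l • w :=
  skeleton_of_sublevel_set_fermatTorricelli_general hd p γ hγ α x₀ hx₀
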